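/- Consider a reaction network with rate constants κ_k and general intensity functions λ_k built from functions θ_i : ℤ → ℝ_{≥0} satisfying θ_i(x) = 0 for x ≤ 0 and θ_i(j) > 0 for all integers j ≥ 1, and suppose that for each i = 1,…,m either θ_i(x) → ∞ or θ_i(x) → 0 as x → ∞. Suppose that for some c ∈ ℝ^m_{>0} the product-form measure π_c satisfies the stationarity equation ∑_{k=1}^K π_c(x − y_k' + y_k) λ_k(x − y_k' + y_k) = π_c(x) ∑_{k=1}^K λ_k(x) for every x ∈ ℤ^m_{≥0}. Then c is a complex balanced equilibrium of the network: for every complex z ∈ C, ∑_{k : y_k' = z} κ_k c^{y_k} = ∑_{k : y_k = z} κ_k c^{y_k}. -/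

import Mathlib

open Finset Filter

/-- General (non-mass action) intensity function:
`λ_k(x) = κ_k ∏_i ∏_{j=0}^{y_{ki}-1} θ_i(x_i - j)`. -/
noncomputable def genIntensity (m K : ℕ) (y : Fin K → Fin m → ℕ) (κ : Fin K → ℝ)
    (θ : Fin m → ℤ → ℝ) (k : Fin K) (x : Fin m → ℤ) : ℝ :=
  κ k * ∏ i, ∏ j ∈ Finset.range (y k i), θ i (x i - j)

/-- Product-form measure `π_c(x) = ∏_i c_i^{x_i} / ∏_{j=1}^{x_i} θ_i(j)`,
extended by `0` outside `ℤ^m_{≥0}`. -/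
noncomputable def prodForm (m : ℕ) (c : Fin m → ℝ) (θ : Fin m → ℤ → ℝ)
    (x : Fin m → ℤ) : ℝ :=
  if ∀ i, 0 ≤ x i then
    ∏ i, (c i ^ (x i).toNat / ∏ j ∈ Finset.range (x i).toNat, θ i (j + 1))
  else 0

/-- `c` is a complex balanced equilibrium: for each complex `z`,
`∑_{k : y_k' = z} κ_k c^{y_k} = ∑_{k : y_k = z} κ_k c^{y_k}`. -/
def complexBalanced (m K : ℕ) (y y' : Fin K → Fin m → ℕ) (κ : Fin K → ℝ)
    (c : Fin m → ℝ) : Prop :=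
  ∀ z : Fin m → ℕ, ((∃ k, y k = z) ∨ (∃ k, y' k = z)) →
    ∑ k ∈ Finset.univ.filter (fun k => y' k = z), κ k * ∏ i, c i ^ y k i =
    ∑ k ∈ Finset.univ.filter (fun k => y k = z), κ k * ∏ i, c i ^ y k i

/-- The stationarity equation:
`∑_k μ(x - y_k' + y_k) λ_k(x - y_k' + y_k) = μ(x) ∑_k λ_k(x)` for all `x ∈ ℤ^m_{≥0}`. -/
def stationaryEq (m K : ℕ) (y y' : Fin K → Fin m → ℕ)
    (μ : (Fin m → ℤ) → ℝ) (lam : Fin K → (Fin m → ℤ) → ℝ) : Prop :=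
  ∀ x : Fin m → ℕ,
    ∑ k : Fin K, μ (fun i => (x i : ℤ) - y' k i + y k i) *
        lam k (fun i => (x i : ℤ) - y' k i + y k i)
      = μ (fun i => (x i : ℤ)) * ∑ k : Fin K, lam k (fun i => (x i : ℤ))

/-! Write `π_c(x) = ∏ᵢ hᵢ(xᵢ)` with `hᵢ(n) = cᵢⁿ / ∏_{j ≤ n} θᵢ(j)`. The identity
`hᵢ(n) ∏_{j < a} θᵢ(n - j) = cᵢᵃ hᵢ(n - a)` turns each term `π_c λ_k` at `x - y_k' + y_k` into
`κ_k c^{y_k} π_c(x - y_k')`, so stationarity says `∑_z (in_z - out_z) π_c(x - z) = 0` for all `x`,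
where `in_z` and `out_z` are the two sides of complex balance at `z`.

Since `hᵢ(n + 1) / hᵢ(n) = cᵢ / θᵢ(n + 1)` tends to `0` or to `∞`, the translates `x ↦ π_c(x - z)`
are linearly independent: as `x₁ → ∞` the translates whose first coordinate is extremal (largest
if `θ₁ → ∞`, smallest if `θ₁ → 0`) dominate all others, which isolates one slice of complexes,
and induction on the dimension and on the number of complexes finishes the argument. -/

open Topology

noncomputable def prodFactor (c : ℝ) (θ : ℤ → ℝ) (n : ℤ) : ℝ :=
  if 0 ≤ n then c ^ n.toNat / ∏ j ∈ range n.toNat, θ (j + 1) else 0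

lemma prodForm_eq_prod {m : ℕ} (c : Fin m → ℝ) (θ : Fin m → ℤ → ℝ) (x : Fin m → ℤ) :
    prodForm m c θ x = ∏ i, prodFactor (c i) (θ i) (x i) := by
  unfold prodForm prodFactor
  split_ifs with hx
  · exact prod_congr rfl fun i _ => (if_pos (hx i)).symm
  · obtain ⟨i, hi⟩ := not_forall.mp hx
    exact (prod_eq_zero (mem_univ i) (if_neg hi)).symm

section prodFactor

variable {c : ℝ} {θ : ℤ → ℝ}

lemma prodFactor_ne_zero (hc : c ≠ 0) (hθ : ∀ j, 1 ≤ j → θ j ≠ 0) {n : ℤ} (hn : 0 ≤ n) :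
    prodFactor c θ n ≠ 0 := by
  rw [prodFactor, if_pos hn]
  exact div_ne_zero (pow_ne_zero _ hc) (prod_ne_zero_iff.mpr fun j _ => hθ _ (by omega))

lemma prodFactor_mul_self (hθ0 : θ 0 = 0) (hθ : ∀ j, 1 ≤ j → θ j ≠ 0) (n : ℤ) :
    prodFactor c θ n * θ n = c * prodFactor c θ (n - 1) := by
  rcases lt_trichotomy n 0 with hn | rfl | hn
  · simp only [prodFactor, if_neg hn.not_ge, if_neg (show ¬ 0 ≤ n - 1 by omega), zero_mul,
      mul_zero]
  · simp [prodFactor, hθ0]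
  · obtain ⟨k, rfl⟩ : ∃ k : ℕ, n = k + 1 := ⟨(n - 1).toNat, by omega⟩
    have hk : ((k : ℤ) + 1).toNat = k + 1 := by omega
    simp only [prodFactor, add_sub_cancel_right, hk, Int.toNat_natCast, Nat.cast_nonneg,
      if_true, show (0 : ℤ) ≤ k + 1 by omega, prod_range_succ, pow_succ]
    have hT : ∏ j ∈ range k, θ (j + 1) ≠ 0 := prod_ne_zero_iff.mpr fun j _ => hθ _ (by omega)
    have hθk : θ (k + 1) ≠ 0 := hθ _ (by omega)
    field_simp

lemma prodFactor_mul_prod_range (hθ0 : θ 0 = 0) (hθ : ∀ j, 1 ≤ j → θ j ≠ 0) (n : ℤ) (a : ℕ) :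
    prodFactor c θ n * ∏ j ∈ range a, θ (n - j) = c ^ a * prodFactor c θ (n - a) := by
  induction a with
  | zero => simp
  | succ a ih =>
    rw [prod_range_succ, ← mul_assoc, ih, mul_assoc, prodFactor_mul_self hθ0 hθ, Nat.cast_succ,
      sub_add_eq_sub_sub, pow_succ, mul_assoc]

lemma prodFactor_succ_div (hc : c ≠ 0) (hθ0 : θ 0 = 0) (hθ : ∀ j, 1 ≤ j → θ j ≠ 0) {n : ℤ}
    (hn : 0 ≤ n) : prodFactor c θ (n + 1) / prodFactor c θ n = c / θ (n + 1) := by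
  rw [div_eq_div_iff (prodFactor_ne_zero hc hθ hn) (hθ _ (by omega)),
    prodFactor_mul_self hθ0 hθ, add_sub_cancel_right, mul_comm]

end prodFactor

def TranslatesDecay (u : ℤ → ℝ) : Prop :=
  ∀ a b : ℕ, a < b → Tendsto (fun n : ℕ => u (n - a) / u (n - b)) atTop (𝓝 0)

section TranslatesDecay

variable {u : ℤ → ℝ}

lemma tendsto_div_add_of_tendsto_div_succ (hu : ∀ n, 0 ≤ n → u n ≠ 0)
    (h : Tendsto (fun n => u (n + 1) / u n) atTop (𝓝 0)) (g : ℕ) :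
    Tendsto (fun n => u (n + (g + 1)) / u n) atTop (𝓝 0) := by
  induction g with
  | zero => simpa using h
  | succ g ih =>
    have hstep := (h.comp (tendsto_atTop_add_const_right _ ((g : ℤ) + 1) tendsto_id)).mul ih
    rw [mul_zero] at hstep
    refine hstep.congr' ?_
    filter_upwards [eventually_ge_atTop 0] with n hn
    rw [Function.comp_apply, id, div_mul_div_cancel₀ (hu _ (by omega))]
    push_cast
    ring_nf

lemma translatesDecay_of_tendsto_div_succ (hu : ∀ n, 0 ≤ n → u n ≠ 0)
    (h : Tendsto (fun n => u (n + 1) / u n) atTop (𝓝 0)) : TranslatesDecay u := by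
  intro a b hab
  have hb : Tendsto (fun n : ℕ => (n : ℤ) - b) atTop atTop :=
    tendsto_atTop_add_const_right _ _ tendsto_natCast_atTop_atTop
  refine ((tendsto_div_add_of_tendsto_div_succ hu h (b - a - 1)).comp hb).congr fun n => ?_
  simp only [Function.comp_apply]
  congr 2
  omega

lemma exists_dominant_translate (hu : TranslatesDecay u ∨ TranslatesDecay u⁻¹) {A : Finset ℕ}
    (hA : A.Nonempty) :
    ∃ a ∈ A, ∀ b ∈ A, b ≠ a → Tendsto (fun n : ℕ => u (n - b) / u (n - a)) atTop (𝓝 0) := by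
  rcases hu with hu | hu
  · exact ⟨A.max' hA, A.max'_mem hA, fun b hb hne => hu b _ ((A.le_max' b hb).lt_of_ne hne)⟩
  · refine ⟨A.min' hA, A.min'_mem hA, fun b hb hne => ?_⟩
    simpa only [Pi.inv_apply, inv_div_inv] using hu _ b ((A.min'_le b hb).lt_of_ne hne.symm)

lemma sum_filter_eq_zero_of_tendsto_div {ι : Type*} (hu : ∀ n, 0 ≤ n → u n ≠ 0) (S : Finset ι)
    (e : ι → ℕ) (F : ι → ℝ) (a : ℕ)
    (hdom : ∀ w ∈ S, e w ≠ a → Tendsto (fun n : ℕ => u (n - e w) / u (n - a)) atTop (𝓝 0))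
    (hsum : ∀ n : ℕ, ∑ w ∈ S, F w * u (n - e w) = 0) :
    ∑ w ∈ S with e w = a, F w = 0 := by
  have hlim : Tendsto (fun n : ℕ => ∑ w ∈ S with e w ≠ a, F w * (u (n - e w) / u (n - a)))
      atTop (𝓝 0) := by
    simpa using tendsto_finsetSum _ fun w hw =>
      (hdom w (mem_filter.1 hw).1 (mem_filter.1 hw).2).const_mul (F w)
  have hev : ∀ᶠ n : ℕ in atTop, ∑ w ∈ S with e w ≠ a, F w * (u (n - e w) / u (n - a)) =
      -∑ w ∈ S with e w = a, F w := by
    filter_upwards [eventually_ge_atTop a] with n hn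
    have hna : u (n - a) ≠ 0 := hu _ (by omega)
    have hdiv : ∑ w ∈ S, F w * (u (n - e w) / u (n - a)) = 0 := by
      simp only [← mul_div_assoc, ← sum_div, hsum n, zero_div]
    rw [← sum_filter_add_sum_filter_not S (fun w => e w = a)] at hdiv
    rw [sum_congr rfl fun w hw => by rw [(mem_filter.1 hw).2, div_self hna, mul_one]] at hdiv
    linarith
  exact neg_eq_zero.mp
    (tendsto_nhds_unique (tendsto_const_nhds.congr' (hev.mono fun _ h => h.symm)) hlim)

end TranslatesDecay

lemma translatesDecay_prodFactor_or_inv {c : ℝ} {θ : ℤ → ℝ} (hc : c ≠ 0) (hθ0 : θ 0 = 0)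
    (hθ : ∀ j, 1 ≤ j → θ j ≠ 0) (hlim : Tendsto θ atTop atTop ∨ Tendsto θ atTop (𝓝 0)) :
    TranslatesDecay (prodFactor c θ) ∨ TranslatesDecay (prodFactor c θ)⁻¹ := by
  have hratio : ∀ᶠ n in atTop, c / θ (n + 1) = prodFactor c θ (n + 1) / prodFactor c θ n :=
    (eventually_ge_atTop 0).mono fun n hn => (prodFactor_succ_div hc hθ0 hθ hn).symm
  have hshift : Tendsto (fun n : ℤ => n + 1) atTop atTop :=
    tendsto_atTop_add_const_right _ 1 tendsto_id
  rcases hlim with hlim | hlim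
  · refine .inl (translatesDecay_of_tendsto_div_succ (fun n hn => prodFactor_ne_zero hc hθ hn) ?_)
    exact ((hlim.comp hshift).const_div_atTop c).congr' hratio
  · refine .inr (translatesDecay_of_tendsto_div_succ
      (fun n hn => inv_ne_zero (prodFactor_ne_zero hc hθ hn)) ?_)
    have hθc : Tendsto (fun n => θ (n + 1) / c) atTop (𝓝 0) := by
      simpa using (hlim.comp hshift).div_const c
    refine hθc.congr' (hratio.mono fun n hn => ?_)
    simp only [Pi.inv_apply, inv_div_inv]
    rw [← inv_div, hn, inv_div]

lemma eq_zero_of_forall_sum_filter_eq_zero {m : ℕ} {g : Fin m → ℤ → ℝ}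
    (hli : LinearIndependent ℝ fun (t x : Fin m → ℕ) => ∏ i, g i (x i - t i))
    {S : Finset (Fin (m + 1) → ℕ)} {d : (Fin (m + 1) → ℕ) → ℝ} {a : ℕ}
    (hsum : ∀ x : Fin m → ℕ, ∑ w ∈ S with w 0 = a, d w * ∏ i, g i (x i - w i.succ) = 0) :
    ∀ w ∈ S, w 0 = a → d w = 0 := by
  have hcons : Function.Injective (@Fin.cons m (fun _ => ℕ) a) :=
    Fin.cons_right_injective (α := fun _ => ℕ) a
  have htail := linearIndependent_iff'.mp hli ((S.filter (· 0 = a)).preimage _ hcons.injOn)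
    (fun t => d (Fin.cons a t)) ?_
  · intro w hw hwa
    simpa [← hwa] using htail (Fin.tail w) (by simpa [mem_preimage, ← hwa] using hw)
  · ext x
    simp only [Finset.sum_apply, Pi.smul_apply, smul_eq_mul, Pi.zero_apply]
    rw [← hsum x, ← sum_preimage _ _ hcons.injOn
      (fun w => d w * ∏ i, g i (x i - w i.succ)) fun w hw hwr =>
        absurd ⟨Fin.tail w, by simp [← (mem_filter.1 hw).2]⟩ hwr]
    simp only [Fin.cons_succ]

theorem linearIndependent_prod_translates {m : ℕ} (h : Fin m → ℤ → ℝ)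
    (hne : ∀ i n, 0 ≤ n → h i n ≠ 0)
    (hdecay : ∀ i, TranslatesDecay (h i) ∨ TranslatesDecay (h i)⁻¹) :
    LinearIndependent ℝ fun (z x : Fin m → ℕ) => ∏ i, h i (x i - z i) := by
  induction m with
  | zero =>
    refine linearIndependent_unique_iff.mpr fun h0 => ?_
    simpa using congrFun h0 default
  | succ m ih =>
    rw [linearIndependent_iff']
    intro S
    induction S using Finset.strongInduction with
    | H S ihS =>
    intro d hsum z hz
    have hsum_at (x : Fin (m + 1) → ℕ) : ∑ w ∈ S, d w * ∏ i, h i (x i - w i) = 0 := by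
      simpa using congrFun hsum x
    obtain ⟨a, ha, hdom⟩ :=
      exists_dominant_translate (hdecay 0) (Finset.Nonempty.image ⟨z, hz⟩ (· 0))
    have hslice_sum (x' : Fin m → ℕ) :
        ∑ w ∈ S with w 0 = a, d w * ∏ i, h i.succ (x' i - w i.succ) = 0 :=
      sum_filter_eq_zero_of_tendsto_div (hne 0) S (· 0) _ a
        (fun w hw => hdom _ (mem_image_of_mem _ hw)) fun n => by
          rw [← hsum_at (Fin.cons n x')]
          refine sum_congr rfl fun w _ => ?_
          simp only [Fin.prod_univ_succ, Fin.cons_zero, Fin.cons_succ]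
          ring
    have hslice : ∀ w ∈ S, w 0 = a → d w = 0 :=
      eq_zero_of_forall_sum_filter_eq_zero (ih (fun i => h i.succ) (fun i => hne i.succ)
        fun i => hdecay i.succ) hslice_sum
    have hrest : ∀ w ∈ S.filter (· 0 ≠ a), d w = 0 := by
      refine ihS _ ?_ d ?_
      · obtain ⟨w, hw, rfl⟩ := mem_image.1 ha
        exact filter_ssubset.2 ⟨w, hw, not_not.2 rfl⟩
      · refine (sum_filter_of_ne (p := (· 0 ≠ a)) fun w hw hdw hwa => hdw ?_).trans hsum
        rw [hslice w hw hwa, zero_smul]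
    by_cases hza : z 0 = a
    · exact hslice z hz hza
    · exact hrest z (mem_filter.2 ⟨hz, hza⟩)

section ReactionNetwork

variable {m K : ℕ} {y y' : Fin K → Fin m → ℕ} {κ : Fin K → ℝ} {c : Fin m → ℝ}
  {θ : Fin m → ℤ → ℝ}

lemma prodForm_mul_genIntensity (hθ0 : ∀ i, θ i 0 = 0) (hθ : ∀ i j, 1 ≤ j → θ i j ≠ 0)
    (k : Fin K) (v : Fin m → ℤ) :
    prodForm m c θ v * genIntensity m K y κ θ k v =
      (κ k * ∏ i, c i ^ y k i) * ∏ i, prodFactor (c i) (θ i) (v i - y k i) := by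
  simp only [prodForm_eq_prod, genIntensity, mul_left_comm _ (κ k), mul_assoc,
    ← prod_mul_distrib, prodFactor_mul_prod_range (hθ0 _) (hθ _)]

lemma stationaryEq_prodForm_iff (hθ0 : ∀ i, θ i 0 = 0) (hθ : ∀ i j, 1 ≤ j → θ i j ≠ 0) :
    stationaryEq m K y y' (prodForm m c θ) (genIntensity m K y κ θ) ↔
      ∀ x : Fin m → ℕ,
        ∑ k, (κ k * ∏ i, c i ^ y k i) * ∏ i, prodFactor (c i) (θ i) (x i - y' k i) =
          ∑ k, (κ k * ∏ i, c i ^ y k i) * ∏ i, prodFactor (c i) (θ i) (x i - y k i) := by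
  simp only [stationaryEq, mul_sum, prodForm_mul_genIntensity hθ0 hθ, add_sub_cancel_right]

end ReactionNetwork

theorem stmt7_general (m K : ℕ) (y y' : Fin K → Fin m → ℕ) (κ : Fin K → ℝ)
    (c : Fin m → ℝ) (θ : Fin m → ℤ → ℝ)
    (hc : ∀ i, 0 < c i)
    (hθ0 : ∀ i, ∀ x : ℤ, x ≤ 0 → θ i x = 0)
    (hθpos : ∀ i, ∀ j : ℤ, 1 ≤ j → 0 < θ i j)
    (hθlim : ∀ i, Filter.Tendsto (θ i) Filter.atTop Filter.atTop ∨
      Filter.Tendsto (θ i) Filter.atTop (nhds 0))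
    (hstat : stationaryEq m K y y' (prodForm m c θ) (genIntensity m K y κ θ)) :
    complexBalanced m K y y' κ c := by
  have hθzero i : θ i 0 = 0 := hθ0 i 0 le_rfl
  have hθne i j (hj : 1 ≤ j) : θ i j ≠ 0 := (hθpos i j hj).ne'
  set w : Fin K → ℝ := fun k => κ k * ∏ i, c i ^ y k i
  set v : (Fin m → ℕ) → (Fin m → ℕ) → ℝ := fun z x => ∏ i, prodFactor (c i) (θ i) (x i - z i)
  have hli : LinearIndependent ℝ v := linearIndependent_prod_translates _
    (fun i _ => prodFactor_ne_zero (hc i).ne' (hθne i))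
    fun i => translatesDecay_prodFactor_or_inv (hc i).ne' (hθzero i) (hθne i) (hθlim i)
  have hbal : ∑ k, w k • v (y' k) = ∑ k, w k • v (y k) := funext fun x => by
    simpa [v, w] using (stationaryEq_prodForm_iff hθzero hθne).mp hstat x
  set S := univ.image y ∪ univ.image y'
  have hfiber (g : Fin K → Fin m → ℕ) (hg : ∀ k, g k ∈ S) :
      ∑ z ∈ S, (∑ k with g k = z, w k) • v z = ∑ k, w k • v (g k) := by
    rw [← sum_fiberwise_of_maps_to (fun k _ => hg k)]
    refine sum_congr rfl fun z _ => ?_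
    rw [sum_smul]
    exact sum_congr rfl fun k hk => by rw [(mem_filter.1 hk).2]
  have hzero := linearIndependent_iff'.mp hli S
    (fun z => ∑ k with y' k = z, w k - ∑ k with y k = z, w k) (by
      simp only [sub_smul, sum_sub_distrib]
      rw [hfiber y' (by simp [S]), hfiber y (by simp [S]), hbal, sub_self])
  intro z hz
  exact sub_eq_zero.mp (hzero z (by simpa [S, or_comm] using hz))

/-- (Converse, `θ_i → ∞` or `θ_i → 0` case.) If each `θ_i` tends to
`∞` or to `0` and the product-form measure `π_c` satisfies the stationarity equation,
then `c` is a complex balanced equilibrium. -/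
theorem stmt7 (m K : ℕ) (y y' : Fin K → Fin m → ℕ) (κ : Fin K → ℝ)
    (c : Fin m → ℝ) (θ : Fin m → ℤ → ℝ)
    (hyy' : ∀ k, y k ≠ y' k) (hκ : ∀ k, 0 < κ k) (hc : ∀ i, 0 < c i)
    (hθnn : ∀ i x, 0 ≤ θ i x)
    (hθ0 : ∀ i, ∀ x : ℤ, x ≤ 0 → θ i x = 0)
    (hθpos : ∀ i, ∀ j : ℤ, 1 ≤ j → 0 < θ i j)
    (hθlim : ∀ i, Filter.Tendsto (θ i) Filter.atTop Filter.atTop ∨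
      Filter.Tendsto (θ i) Filter.atTop (nhds 0))
    (hstat : stationaryEq m K y y' (prodForm m c θ) (genIntensity m K y κ θ)) :
    complexBalanced m K y y' κ c :=
  stmt7_general m K y y' κ c θ hc hθ0 hθpos hθlim hstat
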